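/- arXiv:1806.07749 — 6 statements merged into one kernel-verified Lean document; each statement's English description precedes it below -/
import Mathlib

section
/- Let T be a pure shear stress tensor with s ≠ 0 and let P be a symmetric positive definite 3×3 matrix. Then P commutes with T if and only if P has the form P = [[p,q,0],[q,p,0],[0,0,r]]. Moreover, in that case p = (μ1+μ2)/2, q = (μ1−μ2)/2 and r = μ3, where μ1, μ2, μ3 are the eigenvalues of P (eigenvalue μ1 with eigenvector (1,1,0)/√2, μ2 with (−1,1,0)/√2, μ3 with (0,0,1)). -/
open Matrix

/-- The pure shear stress tensor `T = s (e1⊗e2 + e2⊗e1)`. -/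
noncomputable def pureShear (s : ℝ) : Matrix (Fin 3) (Fin 3) ℝ :=
  !![0, s, 0; s, 0, 0; 0, 0, 0]

/-- A symmetric positive definite `P` commutes with a nontrivial pure shear stress `T`
iff `P = [[p,q,0],[q,p,0],[0,0,r]]`; moreover then `p = (μ1+μ2)/2`, `q = (μ1-μ2)/2`,
`r = μ3` in terms of the eigenvalues of `P`. -/
theorem commutes_with_pure_shear_iff (s : ℝ) (hs : s ≠ 0)
    (P : Matrix (Fin 3) (Fin 3) ℝ) (hP : P.PosDef) :
    (P * pureShear s = pureShear s * P ↔
      ∃ p q r : ℝ, P = !![p, q, 0; q, p, 0; 0, 0, r]) ∧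
    (∀ p q r μ1 μ2 μ3 : ℝ, P = !![p, q, 0; q, p, 0; 0, 0, r] →
      P *ᵥ ![1, 1, 0] = μ1 • ![1, 1, 0] →
      P *ᵥ ![-1, 1, 0] = μ2 • ![-1, 1, 0] →
      P *ᵥ ![0, 0, 1] = μ3 • ![0, 0, 1] →
      p = (μ1 + μ2) / 2 ∧ q = (μ1 - μ2) / 2 ∧ r = μ3) := by
  have hsym : ∀ i j, P j i = P i j := by
    intro i j
    have := congrFun (congrFun hP.1 j) i
    simpa using this.symm
  constructor
  · constructor
    · intro h
      have key : ∀ i j : Fin 3, (P * pureShear s) i j = (pureShear s * P) i j :=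
        fun i j => by rw [h]
      have e10 := key 1 0
      have e20 := key 2 0
      have e21 := key 2 1
      have e02 := key 0 2
      have e12 := key 1 2
      simp [pureShear, Matrix.mul_apply, Fin.sum_univ_three, Matrix.vecHead,
        Matrix.vecTail, hs] at e10 e20 e21 e02 e12
      have h11 : P 1 1 = P 0 0 := by
        apply mul_left_cancel₀ hs; linarith
      have h21 : P 2 1 = 0 := e20
      have h20 : P 2 0 = 0 := e21
      have h12 : P 1 2 = 0 := e02
      have h02 : P 0 2 = 0 := e12
      refine ⟨P 0 0, P 0 1, P 2 2, ?_⟩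
      ext i j
      fin_cases i <;> fin_cases j <;>
        simp [h11, h21, h20, h12, h02, hsym 0 1]
    · rintro ⟨p, q, r, rfl⟩
      ext i j
      fin_cases i <;> fin_cases j <;>
        simp [pureShear, Matrix.mul_apply, Fin.sum_univ_three, Matrix.vecHead, Matrix.vecTail, mul_comm]
  · rintro p q r μ1 μ2 μ3 rfl h1 h2 h3
    have c1 := congrFun h1 0
    have c2 := congrFun h2 0
    have c3 := congrFun h3 2
    simp [Matrix.mulVec, dotProduct, Fin.sum_univ_three] at c1 c2 c3
    refine ⟨by linarith, by linarith, by linarith⟩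
end

section
/- Let B = V_α² where V_α is the finite pure shear stretch with parameter α. Then any F ∈ GL⁺(3) with FFᵀ = B is of the form F = (1/√cosh(2α))·[[1, sinh(2α), 0],[0, cosh(2α), 0],[0,0,√cosh(2α)]]·Q for some Q ∈ SO(3). -/
/-!
With `c = cosh 2α` and `s = sinh 2α`, the matrix `V_α²` factors as `S Sᵀ` for the unimodular
upper triangular matrix `S = c^{-1/2} [[1, s, 0], [0, c, 0], [0, 0, √c]]`, because `c² - s² = 1`.
Hence `Q = S⁻¹ F` satisfies `Q Qᵀ = 1`, and `det Q = det F > 0` forces `det Q = 1`.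
-/

open Matrix

noncomputable def pureShearStretch (α : ℝ) : Matrix (Fin 3) (Fin 3) ℝ :=
  !![Real.cosh α, Real.sinh α, 0; Real.sinh α, Real.cosh α, 0; 0, 0, 1]

theorem Matrix.exists_mul_transpose_eq_one_of_mul_transpose_eq {n R : Type*} [Fintype n]
    [DecidableEq n] [CommRing R] {F S : Matrix n n R} (hS : IsUnit S.det)
    (h : F * Fᵀ = S * Sᵀ) : ∃ Q : Matrix n n R, Q * Qᵀ = 1 ∧ F = S * Q := by
  refine ⟨S⁻¹ * F, ?_, by rw [← Matrix.mul_assoc, mul_nonsing_inv S hS, one_mul]⟩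
  calc S⁻¹ * F * (S⁻¹ * F)ᵀ = S⁻¹ * (F * Fᵀ) * S⁻¹ᵀ := by
        simp only [transpose_mul, Matrix.mul_assoc]
    _ = (S⁻¹ * S) * (S⁻¹ * S)ᵀ := by
        rw [h, transpose_mul]; simp only [Matrix.mul_assoc]
    _ = 1 := by rw [nonsing_inv_mul S hS, transpose_one, one_mul]

theorem Matrix.det_eq_one_of_mul_transpose_eq_one_of_pos {n : Type*} [Fintype n]
    [DecidableEq n] {Q : Matrix n n ℝ} (hQ : Q * Qᵀ = 1) (hpos : 0 < Q.det) : Q.det = 1 := by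
  have h : Q.det * Q.det = 1 := by
    simpa [det_transpose] using congrArg det hQ
  nlinarith

theorem pureShearStretch_mul_self (α : ℝ) :
    pureShearStretch α * pureShearStretch α =
      !![Real.cosh (2 * α), Real.sinh (2 * α), 0;
         Real.sinh (2 * α), Real.cosh (2 * α), 0; 0, 0, 1] := by
  rw [pureShearStretch, mul_fin_three, Real.cosh_two_mul, Real.sinh_two_mul]
  simp only [mul_zero, zero_mul, add_zero, zero_add, mul_one]
  congr 2 <;> ring_nf

noncomputable def leftSimpleShear (c s : ℝ) : Matrix (Fin 3) (Fin 3) ℝ :=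
  (1 / Real.sqrt c) • !![1, s, 0; 0, c, 0; 0, 0, Real.sqrt c]

theorem leftSimpleShear_mul_transpose {c s : ℝ} (hc : 0 < c) (hcs : c ^ 2 - s ^ 2 = 1) :
    leftSimpleShear c s * (leftSimpleShear c s)ᵀ = !![c, s, 0; s, c, 0; 0, 0, 1] := by
  have hr : Real.sqrt c ^ 2 = c := Real.sq_sqrt hc.le
  have hr0 : Real.sqrt c ≠ 0 := (Real.sqrt_pos.mpr hc).ne'
  ext i j
  fin_cases i <;> fin_cases j <;> simp [leftSimpleShear, mul_apply, Fin.sum_univ_three] <;>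
    field_simp <;> simp only [hr] <;> linarith

theorem det_leftSimpleShear {c : ℝ} (s : ℝ) (hc : 0 < c) : (leftSimpleShear c s).det = 1 := by
  have hr : Real.sqrt c ^ 2 = c := Real.sq_sqrt hc.le
  have hr0 : Real.sqrt c ≠ 0 := (Real.sqrt_pos.mpr hc).ne'
  rw [leftSimpleShear, det_smul, det_fin_three]
  simp only [one_div, Fintype.card_fin, inv_pow, Fin.isValue, of_apply, cons_val', cons_val_zero,
    cons_val_fin_one, cons_val_one, one_mul, cons_val, mul_zero, sub_zero, zero_mul, add_zero]
  field_simp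
  exact hr.symm

/-- Any `F ∈ GL⁺(3)` with `FFᵀ = V_α²` is a left finite simple shear composed with a
rotation `Q ∈ SO(3)`. -/
theorem deformation_for_pure_shear_stretch_squared (α : ℝ)
    (F : Matrix (Fin 3) (Fin 3) ℝ) (hF : 0 < F.det)
    (hB : F * Fᵀ = pureShearStretch α * pureShearStretch α) :
    ∃ Q : Matrix (Fin 3) (Fin 3) ℝ, Q * Qᵀ = 1 ∧ Q.det = 1 ∧
      F = (1 / Real.sqrt (Real.cosh (2 * α))) •
          !![1, Real.sinh (2 * α), 0;
             0, Real.cosh (2 * α), 0;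
             0, 0, Real.sqrt (Real.cosh (2 * α))] * Q := by
  have hc := Real.cosh_pos (2 * α)
  rw [pureShearStretch_mul_self,
    ← leftSimpleShear_mul_transpose hc (Real.cosh_sq_sub_sinh_sq (2 * α))] at hB
  have hdet := det_leftSimpleShear (Real.sinh (2 * α)) hc
  obtain ⟨Q, hQ, rfl⟩ := exists_mul_transpose_eq_one_of_mul_transpose_eq (hdet ▸ isUnit_one) hB
  rw [det_mul, hdet, one_mul] at hF
  exact ⟨Q, hQ, det_eq_one_of_mul_transpose_eq_one_of_pos hQ hF, rfl⟩
end

section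
/- For α ∈ R let V_α = [[cosh α, sinh α, 0],[sinh α, cosh α, 0],[0,0,1]] and R = (1/√cosh 2α)·[[cosh α, sinh α, 0],[−sinh α, cosh α, 0],[0,0,√cosh 2α]]. Then R ∈ SO(3), and V_α·R = (1/√cosh 2α)·[[1, sinh 2α, 0],[0, cosh 2α, 0],[0,0,√cosh 2α]] (the left finite simple shear) while R·V_α = (1/√cosh 2α)·[[cosh 2α, sinh 2α, 0],[0,1,0],[0,0,√cosh 2α]] (the right finite simple shear). -/
/-!
With `c = cosh α`, `s = sinh α`, `k = √(cosh 2α)`, the block `M = [[c, s, 0], [-s, c, 0], [0, 0, k]]`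
satisfies `M Mᵀ = k² I` and `det M = k³` because `c² + s² = cosh 2α = k²`, so `R = M / k` lies in
`SO(3)`. The shear formulas are the entries of `V_α M` and `M V_α`, simplified with `c² - s² = 1`
and `2sc = sinh 2α`.
-/

open Matrix

/-- The rotation `R` appearing in the polar decompositions of finite simple shears. -/
noncomputable def shearRotation (α : ℝ) : Matrix (Fin 3) (Fin 3) ℝ :=
  (1 / Real.sqrt (Real.cosh (2 * α))) •
    !![Real.cosh α, Real.sinh α, 0;
       -Real.sinh α, Real.cosh α, 0;
       0, 0, Real.sqrt (Real.cosh (2 * α))]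

section ScaledRotation

variable {R : Type*} [CommRing R]

theorem scaledRotation_mul_transpose {a b k : R} (h : a ^ 2 + b ^ 2 = k ^ 2) :
    !![a, b, 0; -b, a, 0; 0, 0, k] * (!![a, b, 0; -b, a, 0; 0, 0, k])ᵀ = k ^ 2 • 1 := by
  ext i j
  fin_cases i <;> fin_cases j <;> simp [mul_apply, Fin.sum_univ_three, one_apply] <;> grind

theorem det_scaledRotation (a b k : R) :
    (!![a, b, 0; -b, a, 0; 0, 0, k]).det = (a ^ 2 + b ^ 2) * k := by
  rw [det_fin_three]
  simp only [of_apply, cons_val', cons_val_zero, cons_val_one, cons_val, cons_val_fin_one]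
  ring

theorem symmetricStretch_mul_scaledRotation (a b k : R) :
    !![a, b, 0; b, a, 0; 0, 0, 1] * !![a, b, 0; -b, a, 0; 0, 0, k] =
      !![a ^ 2 - b ^ 2, 2 * b * a, 0; 0, a ^ 2 + b ^ 2, 0; 0, 0, k] := by
  rw [mul_fin_three]
  ring_nf

theorem scaledRotation_mul_symmetricStretch (a b k : R) :
    !![a, b, 0; -b, a, 0; 0, 0, k] * !![a, b, 0; b, a, 0; 0, 0, 1] =
      !![a ^ 2 + b ^ 2, 2 * b * a, 0; 0, a ^ 2 - b ^ 2, 0; 0, 0, k] := by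
  rw [mul_fin_three]
  ring_nf

end ScaledRotation

theorem one_div_smul_scaledRotation_mem_specialOrthogonalGroup {a b k : ℝ} (hk : k ≠ 0)
    (h : a ^ 2 + b ^ 2 = k ^ 2) :
    (1 / k) • !![a, b, 0; -b, a, 0; 0, 0, k] ∈ specialOrthogonalGroup (Fin 3) ℝ := by
  refine mem_specialOrthogonalGroup_iff.mpr ⟨(mem_orthogonalGroup_iff _ _).mpr ?_, ?_⟩
  · have hscale : 1 / k * (1 / k) * k ^ 2 = 1 := by field_simp
    rw [transpose_smul, smul_mul_smul_comm, scaledRotation_mul_transpose h, smul_smul, hscale,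
      one_smul]
  · rw [det_smul, det_scaledRotation, h, Fintype.card_fin]
    field_simp

/-- `R ∈ SO(3)`, `V_α·R` is the left finite simple shear and `R·V_α` is the right finite
simple shear deformation. -/
theorem polar_decomposition_finite_simple_shear (α : ℝ) :
    shearRotation α * (shearRotation α)ᵀ = 1 ∧ (shearRotation α).det = 1 ∧
    pureShearStretch α * shearRotation α =
      (1 / Real.sqrt (Real.cosh (2 * α))) •
        !![1, Real.sinh (2 * α), 0;
           0, Real.cosh (2 * α), 0;
           0, 0, Real.sqrt (Real.cosh (2 * α))] ∧
    shearRotation α * pureShearStretch α =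
      (1 / Real.sqrt (Real.cosh (2 * α))) •
        !![Real.cosh (2 * α), Real.sinh (2 * α), 0;
           0, 1, 0;
           0, 0, Real.sqrt (Real.cosh (2 * α))] := by
  have hk : Real.sqrt (Real.cosh (2 * α)) ≠ 0 := (Real.sqrt_pos.mpr (Real.cosh_pos _)).ne'
  have hsq : Real.cosh α ^ 2 + Real.sinh α ^ 2 = Real.sqrt (Real.cosh (2 * α)) ^ 2 := by
    rw [Real.sq_sqrt (Real.cosh_pos _).le, Real.cosh_two_mul]
  obtain ⟨horth, hdet⟩ := mem_specialOrthogonalGroup_iff.mp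
    (one_div_smul_scaledRotation_mem_specialOrthogonalGroup hk hsq)
  refine ⟨(mem_orthogonalGroup_iff _ _).mp horth, hdet, ?_, ?_⟩
  · rw [shearRotation, pureShearStretch, Matrix.mul_smul, symmetricStretch_mul_scaledRotation,
      Real.cosh_sq_sub_sinh_sq, ← Real.sinh_two_mul, ← Real.cosh_two_mul]
  · rw [shearRotation, pureShearStretch, smul_mul, scaledRotation_mul_symmetricStretch,
      Real.cosh_sq_sub_sinh_sq, ← Real.sinh_two_mul, ← Real.cosh_two_mul]
end

section
/- For the compressible Neo-Hookean type stress law σ̂(B) = (1/√det B)·(B − I): if σ̂(B) is a pure shear stress s(e1⊗e2+e2⊗e1) with B of the commuting form [[p,q,0],[q,p,0],[0,0,r]], then necessarily r = 1, p = 1 and q = s/√(1+s²); consequently det B = 1/(1+s²) < 1 for s ≠ 0, so the deformation is planar but not volume preserving. -/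
open Matrix

/-!
Comparing entries of `(det B)^{-1/2} (B - I) = s (e₁⊗e₂ + e₂⊗e₁)` gives `p = r = 1` on the
diagonal and `q = s √(det B)` off it. Then `det B = 1 - q² = 1 - s² det B`, so
`det B = 1 / (1 + s²)`, and `q = s √(det B) = s / √(1 + s²)`.
-/

theorem det_symmBlock {R : Type*} [CommRing R] (p q r : R) :
    (!![p, q, 0; q, p, 0; 0, 0, r] : Matrix (Fin 3) (Fin 3) R).det = (p ^ 2 - q ^ 2) * r := by
  rw [det_fin_three]
  simp only [of_apply, cons_val', cons_val_zero, cons_val_one, cons_val_two, empty_val',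
    cons_val_fin_one, head_cons, head_fin_const, tail_cons]
  ring

theorem eq_of_smul_symmBlock_sub_one_eq_pureShear {p q r s c : ℝ} (hc : c ≠ 0)
    (h : c • ((!![p, q, 0; q, p, 0; 0, 0, r] : Matrix (Fin 3) (Fin 3) ℝ) - 1) = pureShear s) :
    p = 1 ∧ r = 1 ∧ c * q = s := by
  have entry (i j : Fin 3) := congrFun (congrFun h i) j
  simpa [pureShear, hc, sub_eq_zero] using (⟨entry 0 0, entry 2 2, entry 0 1⟩ : _ ∧ _ ∧ _)

theorem eq_one_div_one_add_sq {d q s : ℝ} (hd : 0 ≤ d) (hdq : d = 1 - q ^ 2)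
    (hq : q = s * √d) : d = 1 / (1 + s ^ 2) := by
  rw [hq, mul_pow, Real.sq_sqrt hd] at hdq
  rw [eq_div_iff (by positivity)]
  linarith

/-- For the stress law `σ̂(B) = (1/√det B)(B − I)`: a pure shear Cauchy stress with
`B = [[p,q,0],[q,p,0],[0,0,r]]` forces `r = 1`, `p = 1`, `q = s/√(1+s²)`; hence
`det B = 1/(1+s²) < 1` for `s ≠ 0`: planar but not volume preserving. -/
theorem neo_hookean_pure_shear (p q r s : ℝ)
    (hB : (!![p, q, 0; q, p, 0; 0, 0, r] : Matrix (Fin 3) (Fin 3) ℝ).PosDef)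
    (hσ : (1 / Real.sqrt ((!![p, q, 0; q, p, 0; 0, 0, r] : Matrix (Fin 3) (Fin 3) ℝ).det)) •
        ((!![p, q, 0; q, p, 0; 0, 0, r] : Matrix (Fin 3) (Fin 3) ℝ) - 1) = pureShear s) :
    r = 1 ∧ p = 1 ∧ q = s / Real.sqrt (1 + s ^ 2) ∧
    (s ≠ 0 →
      (!![p, q, 0; q, p, 0; 0, 0, r] : Matrix (Fin 3) (Fin 3) ℝ).det = 1 / (1 + s ^ 2) ∧
      (!![p, q, 0; q, p, 0; 0, 0, r] : Matrix (Fin 3) (Fin 3) ℝ).det < 1) := by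
  set d := (!![p, q, 0; q, p, 0; 0, 0, r] : Matrix (Fin 3) (Fin 3) ℝ).det with hd_def
  have hd : 0 < d := hB.det_pos
  obtain ⟨hp, hr, hqs⟩ :=
    eq_of_smul_symmBlock_sub_one_eq_pureShear (by positivity : 1 / √d ≠ 0) hσ
  have hdq : d = 1 - q ^ 2 := by rw [hd_def, det_symmBlock, hp, hr]; ring
  have hq : q = s * √d := by rw [← hqs]; field_simp
  have hdet : d = 1 / (1 + s ^ 2) := eq_one_div_one_add_sq hd.le hdq hq
  refine ⟨hr, hp, ?_, fun hs => ⟨hdet, ?_⟩⟩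
  · rw [hq, hdet, Real.sqrt_div' _ (by positivity), Real.sqrt_one, mul_one_div]
  · rw [hdet, div_lt_one (by positivity)]
    have := sq_pos_of_ne_zero hs
    linarith
end

section
/- Let W(λ1,λ2,λ3) = W_tc(λ1,λ2,λ3) + f(λ1λ2λ3) where W_tc is C¹, permutation-invariant, and tension-compression symmetric (W_tc(1/λ1,1/λ2,1/λ3) = W_tc(λ1,λ2,λ3)), and f: (0,∞) → R is differentiable with f'(1) = 0. Then the principal Cauchy stresses σ_i = (λ_i/(λ1λ2λ3))·∂W/∂λ_i evaluated at (λ, 1/λ, 1) satisfy σ1 + σ2 = 0 and σ3 = 0 for every λ > 0; i.e., every finite pure shear stretch induces a pure shear Cauchy stress. -/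
/-- For `W(λ1,λ2,λ3) = W_tc(λ1,λ2,λ3) + f(λ1λ2λ3)` with `W_tc` permutation-invariant and
tension-compression symmetric and `f'(1) = 0`, the principal Cauchy stresses
`σ_i = λ_i·(∂W/∂λ_i)/(λ1λ2λ3)` at `(λ, 1/λ, 1)` satisfy `σ1 + σ2 = 0` and `σ3 = 0`. -/
theorem pure_shear_stretch_induces_pure_shear_stress
    (Wtc W1 W2 W3 : ℝ → ℝ → ℝ → ℝ) (f f' : ℝ → ℝ)
    (hW1 : ∀ x y z : ℝ, 0 < x → 0 < y → 0 < z →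
      HasDerivAt (fun t => Wtc t y z) (W1 x y z) x)
    (hW2 : ∀ x y z : ℝ, 0 < x → 0 < y → 0 < z →
      HasDerivAt (fun t => Wtc x t z) (W2 x y z) y)
    (hW3 : ∀ x y z : ℝ, 0 < x → 0 < y → 0 < z →
      HasDerivAt (fun t => Wtc x y t) (W3 x y z) z)
    (hsym : ∀ x y z : ℝ, 0 < x → 0 < y → 0 < z →
      Wtc x y z = Wtc y x z ∧ Wtc x y z = Wtc x z y)
    (htc : ∀ x y z : ℝ, 0 < x → 0 < y → 0 < z →
      Wtc (1 / x) (1 / y) (1 / z) = Wtc x y z)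
    (hf : ∀ x : ℝ, 0 < x → HasDerivAt f (f' x) x)
    (hf1 : f' 1 = 0) :
    ∀ l : ℝ, 0 < l → ∃ d1 d2 d3 : ℝ,
      HasDerivAt (fun t => Wtc t (1 / l) 1 + f (t * (1 / l) * 1)) d1 l ∧
      HasDerivAt (fun t => Wtc l t 1 + f (l * t * 1)) d2 (1 / l) ∧
      HasDerivAt (fun t => Wtc l (1 / l) t + f (l * (1 / l) * t)) d3 1 ∧
      (l / (l * (1 / l) * 1)) * d1 + ((1 / l) / (l * (1 / l) * 1)) * d2 = 0 ∧
      (1 / (l * (1 / l) * 1)) * d3 = 0 := by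
  intro l hl
  have hl' : (0:ℝ) < 1 / l := by positivity
  have h01 : (0:ℝ) < 1 := one_pos
  -- permutation: W1 x y z = W2 y x z
  have perm12 : ∀ x y z : ℝ, 0 < x → 0 < y → 0 < z → W1 x y z = W2 y x z := by
    intro x y z hx hy hz
    have h2 : HasDerivAt (fun t => Wtc y t z) (W2 y x z) x := hW2 y x z hy hx hz
    have heq : (fun t => Wtc t y z) =ᶠ[nhds x] (fun t => Wtc y t z) := by
      filter_upwards [eventually_gt_nhds hx] with t ht
      exact (hsym t y z ht hy hz).1
    exact (hW1 x y z hx hy hz).unique (h2.congr_of_eventuallyEq heq)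
  -- permutation: W3 x y z = W3 y x z
  have perm3 : ∀ x y z : ℝ, 0 < x → 0 < y → 0 < z → W3 x y z = W3 y x z := by
    intro x y z hx hy hz
    have h2 : HasDerivAt (fun t => Wtc y x t) (W3 y x z) z := hW3 y x z hy hx hz
    have heq : (fun t => Wtc x y t) =ᶠ[nhds z] (fun t => Wtc y x t) := by
      filter_upwards [eventually_gt_nhds hz] with t ht
      exact (hsym x y t hx hy ht).1
    exact (hW3 x y z hx hy hz).unique (h2.congr_of_eventuallyEq heq)
  -- tc: W1 x y z = W1 (1/x) (1/y) (1/z) * (-(x^2)⁻¹)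
  have tc1 : ∀ x y z : ℝ, 0 < x → 0 < y → 0 < z →
      W1 x y z = W1 (1/x) (1/y) (1/z) * (-(x^2)⁻¹) := by
    intro x y z hx hy hz
    have hinv : HasDerivAt (fun t : ℝ => 1 / t) (-(x^2)⁻¹) x := by
      simpa [one_div] using hasDerivAt_inv (ne_of_gt hx)
    have hcomp := (hW1 (1/x) (1/y) (1/z) (by positivity) (by positivity) (by positivity)).comp x hinv
    have heq : (fun t => Wtc t y z) =ᶠ[nhds x] (fun t => Wtc (1/t) (1/y) (1/z)) := by
      filter_upwards [eventually_gt_nhds hx] with t ht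
      exact (htc t y z ht hy hz).symm
    exact (hW1 x y z hx hy hz).unique (hcomp.congr_of_eventuallyEq heq)
  -- tc: W3 x y z = W3 (1/x) (1/y) (1/z) * (-(z^2)⁻¹)
  have tc3 : ∀ x y z : ℝ, 0 < x → 0 < y → 0 < z →
      W3 x y z = W3 (1/x) (1/y) (1/z) * (-(z^2)⁻¹) := by
    intro x y z hx hy hz
    have hinv : HasDerivAt (fun t : ℝ => 1 / t) (-(z^2)⁻¹) z := by
      simpa [one_div] using hasDerivAt_inv (ne_of_gt hz)
    have hcomp := (hW3 (1/x) (1/y) (1/z) (by positivity) (by positivity) (by positivity)).comp z hinv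
    have heq : (fun t => Wtc x y t) =ᶠ[nhds z] (fun t => Wtc (1/x) (1/y) (1/t)) := by
      filter_upwards [eventually_gt_nhds hz] with t ht
      exact (htc x y t hx hy ht).symm
    exact (hW3 x y z hx hy hz).unique (hcomp.congr_of_eventuallyEq heq)
  have hprod : l * (1 / l) * 1 = 1 := by field_simp
  have hne : l ≠ 0 := ne_of_gt hl
  -- the three derivatives
  have hd1 : HasDerivAt (fun t => Wtc t (1 / l) 1 + f (t * (1 / l) * 1))
      (W1 l (1/l) 1 + f' 1 * ((1/l) * 1)) l := by
    have hin : HasDerivAt (fun t : ℝ => t * (1 / l) * 1) ((1/l) * 1) l := by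
      simpa using ((hasDerivAt_id l).mul_const (1/l)).mul_const (1:ℝ)
    have := (hf (l * (1/l) * 1) (by rw [hprod]; exact one_pos)).comp l hin
    rw [hprod] at this
    exact (hW1 l (1/l) 1 hl hl' h01).add this
  have hd2 : HasDerivAt (fun t => Wtc l t 1 + f (l * t * 1))
      (W2 l (1/l) 1 + f' 1 * (l * 1)) (1/l) := by
    have hin : HasDerivAt (fun t : ℝ => l * t * 1) (l * 1) (1/l) := by
      simpa [mul_comm] using ((hasDerivAt_id (1/l)).const_mul l).mul_const (1:ℝ)
    have := (hf (l * (1/l) * 1) (by rw [hprod]; exact one_pos)).comp (1/l) hin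
    rw [hprod] at this
    exact (hW2 l (1/l) 1 hl hl' h01).add this
  have hd3 : HasDerivAt (fun t => Wtc l (1 / l) t + f (l * (1 / l) * t))
      (W3 l (1/l) 1 + f' 1 * (l * (1/l))) 1 := by
    have hin : HasDerivAt (fun t : ℝ => l * (1/l) * t) (l * (1/l)) (1:ℝ) := by
      simpa using (hasDerivAt_id (1:ℝ)).const_mul (l * (1/l))
    have := (hf (l * (1/l) * 1) (by rw [hprod]; exact one_pos)).comp 1 hin
    rw [show l * (1/l) * 1 = 1 from hprod] at this
    exact (hW3 l (1/l) 1 hl hl' h01).add this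
  refine ⟨_, _, _, hd1, hd2, hd3, ?_, ?_⟩
  · -- σ1 + σ2 = 0
    rw [hprod, hf1]
    have h1 : W1 l (1/l) 1 = W1 (1/l) l 1 * (-(l^2)⁻¹) := by
      simpa [one_div_one_div] using tc1 l (1/l) 1 hl hl' h01
    have h2 : W1 (1/l) l 1 = W2 l (1/l) 1 := perm12 (1/l) l 1 hl' hl h01
    rw [h1, h2]
    field_simp
    ring
  · -- σ3 = 0
    rw [hprod, hf1]
    have h1 : W3 l (1/l) 1 = W3 (1/l) l 1 * (-(1^2:ℝ)⁻¹) := by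
      simpa [one_div_one_div] using tc3 l (1/l) 1 hl hl' h01
    have h2 : W3 (1/l) l 1 = W3 l (1/l) 1 := perm3 (1/l) l 1 hl' hl h01
    rw [h2] at h1
    have : W3 l (1/l) 1 = 0 := by nlinarith [h1]
    rw [this]; ring
end

section
/- For an isotropic Cauchy stress law σ = β0·I + β1·B + β_{−1}·B⁻¹ (with β_i scalar functions of the invariants of B) evaluated at a simple shear B = F_γF_γᵀ with γ ≠ 0: the resulting Cauchy stress σ = (β0+β1+β_{−1})·I + [[β1γ², (β1−β_{−1})γ, 0],[(β1−β_{−1})γ, β_{−1}γ², 0],[0,0,0]] is a pure shear stress only if β1 = β_{−1}, in which case the shear stress component σ_{12} = (β1−β_{−1})γ vanishes. Hence a nontrivial simple shear never corresponds to a nontrivial pure shear Cauchy stress under such a law. -/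
open Matrix

/-- For an isotropic Cauchy stress `σ = β0 I + β1 B + β₋₁ B⁻¹` at a simple shear
`B = F_γ F_γᵀ` with `γ ≠ 0`: `σ` has the displayed form, and if `σ` is a pure shear
stress then `β1 = β₋₁` and the amount of shear stress `s = (β1−β₋₁)γ` vanishes; i.e. a
nontrivial simple shear never corresponds to a nontrivial pure shear Cauchy stress. -/
theorem simple_shear_never_pure_shear_stress (β0 β1 βm1 γ : ℝ) (hγ : γ ≠ 0) :
    β0 • (1 : Matrix (Fin 3) (Fin 3) ℝ) +
        β1 • (!![1 + γ ^ 2, γ, 0; γ, 1, 0; 0, 0, 1] : Matrix (Fin 3) (Fin 3) ℝ) +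
        βm1 • (!![1, -γ, 0; -γ, 1 + γ ^ 2, 0; 0, 0, 1] : Matrix (Fin 3) (Fin 3) ℝ) =
      (β0 + β1 + βm1) • (1 : Matrix (Fin 3) (Fin 3) ℝ) +
        !![β1 * γ ^ 2, (β1 - βm1) * γ, 0;
           (β1 - βm1) * γ, βm1 * γ ^ 2, 0; 0, 0, 0] ∧
    (∀ s : ℝ,
      β0 • (1 : Matrix (Fin 3) (Fin 3) ℝ) +
          β1 • (!![1 + γ ^ 2, γ, 0; γ, 1, 0; 0, 0, 1] : Matrix (Fin 3) (Fin 3) ℝ) +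
          βm1 • (!![1, -γ, 0; -γ, 1 + γ ^ 2, 0; 0, 0, 1] : Matrix (Fin 3) (Fin 3) ℝ) =
        pureShear s →
      β1 = βm1 ∧ s = 0) := by
  constructor
  · ext i j
    fin_cases i <;> fin_cases j <;>
      simp [Matrix.add_apply, Matrix.smul_apply, Matrix.one_apply, Matrix.cons_val_zero, Matrix.cons_val_one, Matrix.head_cons, Matrix.head_fin_const] <;> (try ring_nf) <;> simp [Matrix.vecHead, Matrix.vecTail]
  · intro s h
    have h00 := congrFun (congrFun h 0) 0
    have h11 := congrFun (congrFun h 1) 1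
    have h01 := congrFun (congrFun h 0) 1
    simp [pureShear, Matrix.add_apply, Matrix.smul_apply, Matrix.one_apply] at h00 h11 h01
    have hb : β1 = βm1 := by
      have hγ2 : γ ^ 2 ≠ 0 := pow_ne_zero _ hγ
      have : (β1 - βm1) * γ ^ 2 = 0 := by nlinarith [h00, h11]
      have := mul_eq_zero.mp this
      rcases this with h | h
      · linarith
      · exact absurd h hγ2
    refine ⟨hb, ?_⟩
    rw [hb] at h01
    nlinarith [h01]
end
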